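/- arXiv:2306.15027 — 4 statements merged into one kernel-verified Lean document; each statement's English description precedes it below -/
import Mathlib

section
/- Let $X = \sum_{k\ge 1} \mathbf{1}_{A_k}$ be a sum of indicators of independent events with $b = \sum_k \mathbb{P}(A_k) < \infty$, and let $a = \sum_k \mathbb{P}(A_k)(1-\mathbb{P}(A_k))$ be the variance of $X$. Then for every real $\vartheta$, $\mathbb{E}\exp(\vartheta(X - b)) \le \exp\big(\tfrac{1}{2}\vartheta^2 e^{|\vartheta|} a\big)$. -/
/-!
With `c = θ² e^|θ| / 2`, the series bound `e^x ≤ 1 + x + x²/2 · e^|x|` gives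
`e^{θz} ≤ 1 + θz + c z²` for `|z| ≤ 1`. Integrating this against a centred `[0,1]`-valued
variable bounds its moment generating function by `1 + c Var ≤ exp (c Var)`; independence
multiplies these bounds along the partial sums of `X - b`, and Fatou's lemma passes to the limit.
-/

open MeasureTheory ProbabilityTheory Real Set Filter Topology Finset
open scoped Nat

namespace Real

theorem exp_le_one_add_add_sq_div_two_mul_exp_abs (x : ℝ) :
    exp x ≤ 1 + x + x ^ 2 / 2 * exp |x| := by
  have hexp : HasSum (fun n : ℕ => x ^ n / n !) (exp x) := by
    rw [exp_eq_exp_ℝ]; exact NormedSpace.expSeries_div_hasSum_exp x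
  have htail : HasSum (fun n : ℕ => x ^ (n + 2) / (n + 2)!) (exp x - (1 + x)) := by
    simpa [Finset.sum_range_succ] using (hasSum_nat_add_iff' 2).mpr hexp
  have hmajorant : HasSum (fun n : ℕ => x ^ 2 / 2 * (|x| ^ n / n !)) (x ^ 2 / 2 * exp |x|) := by
    rw [exp_eq_exp_ℝ]; exact (NormedSpace.expSeries_div_hasSum_exp |x|).mul_left _
  suffices ∀ n : ℕ, x ^ (n + 2) / (n + 2)! ≤ x ^ 2 / 2 * (|x| ^ n / n !) by
    linarith [hasSum_le this htail hmajorant]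
  intro n
  have hfact : (2 * n ! : ℝ) ≤ (n + 2)! := by
    norm_cast
    rw [Nat.factorial_succ, Nat.factorial_succ, ← mul_assoc]
    exact Nat.mul_le_mul_right _ (by nlinarith)
  calc x ^ (n + 2) / (n + 2)! ≤ |x| ^ (n + 2) / (n + 2)! := by
        gcongr ?_ / _; exact (le_abs_self _).trans (abs_pow x _).le
    _ ≤ |x| ^ (n + 2) / (2 * n !) := by gcongr
    _ = x ^ 2 / 2 * (|x| ^ n / n !) := by rw [pow_add, sq_abs]; ring

theorem exp_mul_le_of_abs_le_one {y : ℝ} (hy : |y| ≤ 1) (θ : ℝ) :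
    exp (θ * y) ≤ 1 + θ * y + θ ^ 2 / 2 * exp |θ| * y ^ 2 := by
  have habs : |θ * y| ≤ |θ| := by
    rw [abs_mul]; exact mul_le_of_le_one_right (abs_nonneg θ) hy
  calc exp (θ * y) ≤ 1 + θ * y + (θ * y) ^ 2 / 2 * exp |θ * y| :=
        exp_le_one_add_add_sq_div_two_mul_exp_abs _
    _ ≤ 1 + θ * y + (θ * y) ^ 2 / 2 * exp |θ| := by gcongr
    _ = 1 + θ * y + θ ^ 2 / 2 * exp |θ| * y ^ 2 := by ring

end Real

namespace ProbabilityTheory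

variable {Ω : Type*} [MeasurableSpace Ω] {μ : Measure Ω}

theorem mgf_sub_integral_le_of_mem_Icc [IsProbabilityMeasure μ] {Y : Ω → ℝ}
    (hY : AEMeasurable Y μ) (h01 : ∀ᵐ ω ∂μ, Y ω ∈ Icc (0 : ℝ) 1) (θ : ℝ) :
    mgf (fun ω => Y ω - μ[Y]) μ θ ≤ exp (θ ^ 2 / 2 * exp |θ| * Var[Y; μ]) := by
  set c := θ ^ 2 / 2 * exp |θ|
  have hYint : Integrable Y μ := .of_mem_Icc 0 1 hY h01
  have hmean : μ[Y] ∈ Icc (0 : ℝ) 1 :=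
    ⟨integral_nonneg_of_ae (h01.mono fun _ h => h.1),
      (integral_mono_ae hYint (integrable_const 1) (h01.mono fun _ h => h.2)).trans (by simp)⟩
  have hcentered : ∀ᵐ ω ∂μ, Y ω - μ[Y] ∈ Icc (-1 : ℝ) 1 :=
    h01.mono fun _ h => ⟨by linarith [h.1, hmean.2], by linarith [h.2, hmean.1]⟩
  have hZint : Integrable (fun ω => Y ω - μ[Y]) μ := hYint.sub (integrable_const _)
  have hZsq : Integrable (fun ω => (Y ω - μ[Y]) ^ 2) μ :=
    .of_mem_Icc 0 1 (by fun_prop) (hcentered.mono fun _ h =>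
      ⟨sq_nonneg _, by nlinarith [h.1, h.2]⟩)
  have hlin : Integrable (fun ω => 1 + θ * (Y ω - μ[Y])) μ :=
    (integrable_const 1).add (hZint.const_mul θ)
  calc mgf (fun ω => Y ω - μ[Y]) μ θ
      ≤ ∫ ω, (1 + θ * (Y ω - μ[Y]) + c * (Y ω - μ[Y]) ^ 2) ∂μ := by
        refine integral_mono_ae (integrable_exp_mul_of_mem_Icc (by fun_prop) hcentered)
          (hlin.add (hZsq.const_mul c)) ?_
        filter_upwards [hcentered] with ω h
        exact exp_mul_le_of_abs_le_one (abs_le.2 h) θ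
    _ = 1 + c * Var[Y; μ] := by
        rw [integral_add hlin (hZsq.const_mul c),
          integral_add (integrable_const 1) (hZint.const_mul θ), integral_const_mul,
          integral_const_mul, integral_sub hYint (integrable_const _), integral_const,
          variance_eq_integral hY]
        simp
    _ ≤ exp (c * Var[Y; μ]) := by linarith [add_one_le_exp (c * Var[Y; μ])]

theorem iIndepFun.mgf_sum_sub_integral_le_of_mem_Icc [IsProbabilityMeasure μ] {ι : Type*}
    {Y : ι → Ω → ℝ} (hindep : iIndepFun Y μ) (hmeas : ∀ i, Measurable (Y i))
    (h01 : ∀ i, ∀ᵐ ω ∂μ, Y i ω ∈ Icc (0 : ℝ) 1) (s : Finset ι) (θ : ℝ) :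
    mgf (fun ω => ∑ i ∈ s, (Y i ω - μ[Y i])) μ θ ≤
      exp (θ ^ 2 / 2 * exp |θ| * ∑ i ∈ s, Var[Y i; μ]) := by
  have hcentered : iIndepFun (fun i ω => Y i ω - μ[Y i]) μ := by
    have := hindep.comp (fun i x => x - μ[Y i]) fun i => measurable_sub_const _
    exact this
  have hsum : (fun ω => ∑ i ∈ s, (Y i ω - μ[Y i])) = ∑ i ∈ s, fun ω => Y i ω - μ[Y i] := by
    ext ω; simp
  rw [hsum, hcentered.mgf_sum (fun i => (hmeas i).sub_const _), mul_sum, exp_sum]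
  exact prod_le_prod (fun i _ => mgf_nonneg)
    fun i _ => mgf_sub_integral_le_of_mem_Icc (hmeas i).aemeasurable (h01 i) θ

end ProbabilityTheory

namespace MeasureTheory

theorem integral_le_of_tendsto_of_integral_le {α : Type*} [MeasurableSpace α] {μ : Measure α}
    {f : ℕ → α → ℝ} {g : α → ℝ} {C : ℕ → ℝ} {c : ℝ} (hf_int : ∀ n, Integrable (f n) μ)
    (hf_nonneg : ∀ n, 0 ≤ᵐ[μ] f n) (hlim : ∀ᵐ x ∂μ, Tendsto (fun n => f n x) atTop (𝓝 (g x)))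
    (hC : ∀ n, ∫ x, f n x ∂μ ≤ C n) (hCc : Tendsto C atTop (𝓝 c)) :
    ∫ x, g x ∂μ ≤ c := by
  have hg_nonneg : 0 ≤ᵐ[μ] g := by
    filter_upwards [hlim, ae_all_iff.2 hf_nonneg] with x hx hfx
    exact ge_of_tendsto' hx hfx
  have hc : 0 ≤ c :=
    ge_of_tendsto' hCc fun n => (integral_nonneg_of_ae (hf_nonneg n)).trans (hC n)
  have hg_meas : AEStronglyMeasurable g μ :=
    aestronglyMeasurable_of_tendsto_ae atTop (fun n => (hf_int n).1) hlim
  have hfatou : ∫⁻ x, ENNReal.ofReal (g x) ∂μ ≤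
      liminf (fun n => ∫⁻ x, ENNReal.ofReal (f n x) ∂μ) atTop := by
    calc ∫⁻ x, ENNReal.ofReal (g x) ∂μ
        = ∫⁻ x, liminf (fun n => ENNReal.ofReal (f n x)) atTop ∂μ :=
          lintegral_congr_ae (hlim.mono fun x hx =>
            ((ENNReal.continuous_ofReal.tendsto _).comp hx).liminf_eq.symm)
      _ ≤ _ := lintegral_liminf_le' fun n => (hf_int n).1.aemeasurable.ennreal_ofReal
  have hlimC : liminf (fun n => ∫⁻ x, ENNReal.ofReal (f n x) ∂μ) atTop ≤ ENNReal.ofReal c := by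
    calc liminf (fun n => ∫⁻ x, ENNReal.ofReal (f n x) ∂μ) atTop
        ≤ liminf (fun n => ENNReal.ofReal (C n)) atTop := by
          refine liminf_le_liminf (.of_forall fun n => ?_)
          rw [← ofReal_integral_eq_lintegral_ofReal (hf_int n) (hf_nonneg n)]
          exact ENNReal.ofReal_le_ofReal (hC n)
      _ = ENNReal.ofReal c := ((ENNReal.continuous_ofReal.tendsto c).comp hCc).liminf_eq
  rw [integral_eq_lintegral_of_nonneg_ae hg_nonneg hg_meas]
  exact ENNReal.toReal_le_of_le_ofReal hc (hfatou.trans hlimC)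

end MeasureTheory

namespace ProbabilityTheory

variable {Ω : Type*} [MeasurableSpace Ω] {μ : Measure Ω} [IsProbabilityMeasure μ]

theorem variance_indicator_one {s : Set Ω} (hs : MeasurableSet s) :
    Var[s.indicator fun _ => (1 : ℝ); μ] = μ.real s * (1 - μ.real s) := by
  have hsq : (s.indicator fun _ => (1 : ℝ)) ^ 2 = s.indicator fun _ => 1 := by
    ext ω; by_cases h : ω ∈ s <;> simp [h]
  have hmean : ∫ ω, s.indicator (fun _ => (1 : ℝ)) ω ∂μ = μ.real s := integral_indicator_one hs
  rw [variance_eq_sub (memLp_indicator_const 2 hs 1 (.inr (measure_ne_top μ s))), hsq, hmean]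
  ring

theorem iIndepFun.integral_exp_mul_tsum_sub_le {Y : ℕ → Ω → ℝ} (hindep : iIndepFun Y μ)
    (hmeas : ∀ k, Measurable (Y k)) (h01 : ∀ k, ∀ᵐ ω ∂μ, Y k ω ∈ Icc (0 : ℝ) 1)
    {b : ℝ} (hb : HasSum (fun k => μ[Y k]) b) {a : ℝ} (ha : HasSum (fun k => Var[Y k; μ]) a)
    (hfin : ∀ᵐ ω ∂μ, Summable fun k => Y k ω) (θ : ℝ) :
    ∫ ω, exp (θ * (∑' k, Y k ω - b)) ∂μ ≤ exp (θ ^ 2 / 2 * exp |θ| * a) := by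
  set c := θ ^ 2 / 2 * exp |θ|
  have hpartial (n : ℕ) : ∫ ω, exp (θ * (∑ k ∈ range n, Y k ω - b)) ∂μ ≤
      exp (c * a) * exp (θ * (∑ k ∈ range n, μ[Y k] - b)) := by
    have hsplit (ω : Ω) : exp (θ * (∑ k ∈ range n, Y k ω - b)) =
        exp (θ * ∑ k ∈ range n, (Y k ω - μ[Y k])) * exp (θ * (∑ k ∈ range n, μ[Y k] - b)) := by
      rw [← exp_add, sum_sub_distrib]; ring_nf
    simp_rw [hsplit]
    rw [integral_mul_const]
    gcongr
    calc mgf (fun ω => ∑ k ∈ range n, (Y k ω - μ[Y k])) μ θ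
        ≤ exp (c * ∑ k ∈ range n, Var[Y k; μ]) :=
          hindep.mgf_sum_sub_integral_le_of_mem_Icc hmeas h01 _ θ
      _ ≤ exp (c * a) := by
          gcongr
          exact sum_le_hasSum _ (fun k _ => variance_nonneg _ _) ha
  have hint (n : ℕ) : Integrable (fun ω => exp (θ * (∑ k ∈ range n, Y k ω - b))) μ := by
    refine integrable_exp_mul_of_mem_Icc (a := -b) (b := n - b) (by fun_prop) ?_
    filter_upwards [ae_all_iff.2 h01] with ω hω
    have hsum : ∑ k ∈ range n, Y k ω ≤ n := by
      simpa using sum_le_sum fun k (_ : k ∈ range n) => (hω k).2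
    exact ⟨by linarith [sum_nonneg fun k (_ : k ∈ range n) => (hω k).1], by linarith⟩
  refine integral_le_of_tendsto_of_integral_le hint
    (fun n => ae_of_all _ fun ω => (exp_pos _).le) ?_ hpartial ?_
  · filter_upwards [hfin] with ω hω
    exact ((hω.hasSum.tendsto_sum_nat.sub_const b).const_mul θ).rexp
  · simpa using (((hb.tendsto_sum_nat.sub_const b).const_mul θ).rexp.const_mul (exp (c * a)))

end ProbabilityTheory

theorem stmt1 {Ω : Type*} [MeasurableSpace Ω] (μ : Measure Ω) [IsProbabilityMeasure μ]
    (A : ℕ → Set Ω) (hmeas : ∀ k, MeasurableSet (A k))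
    (hindep : iIndepSet A μ)
    (b : ℝ) (hb : HasSum (fun k => (μ (A k)).toReal) b)
    (a : ℝ) (ha : HasSum (fun k => (μ (A k)).toReal * (1 - (μ (A k)).toReal)) a)
    (X : Ω → ℝ) (hX : ∀ ω, X ω = ∑' k, (A k).indicator (fun _ => (1 : ℝ)) ω)
    (hfin : ∀ᵐ ω ∂μ, Summable (fun k => (A k).indicator (fun _ => (1 : ℝ)) ω))
    (θ : ℝ) :
    ∫ ω, Real.exp (θ * (X ω - b)) ∂μ ≤ Real.exp (θ ^ 2 / 2 * Real.exp |θ| * a) := by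
  have h01 (k : ℕ) (ω : Ω) : (A k).indicator (fun _ => (1 : ℝ)) ω ∈ Icc (0 : ℝ) 1 := by
    by_cases h : ω ∈ A k <;> simp [h]
  simp_rw [hX]
  refine hindep.iIndepFun_indicator.integral_exp_mul_tsum_sub_le
    (fun k => measurable_const.indicator (hmeas k)) (fun k => ae_of_all _ (h01 k)) ?_ ?_ hfin θ
  · convert hb using 2 with k
    exact integral_indicator_one (hmeas k)
  · convert ha using 2 with k
    exact variance_indicator_one (hmeas k)
end

section
/- For every integer $j \ge 2$ and every real $t > 0$: $\sum_{i=0}^{j-1}\frac{(2t)^i}{i!} - \Big(\sum_{i=0}^{j-1}\frac{t^i}{i!}\Big)^2 = -\sum_{i=j}^{2(j-1)}\frac{t^i}{i!}\sum_{k=i-(j-1)}^{j-1}\binom{i}{k} \le 0$. -/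
/-! Multiplying out the square, the pair `(a, b)` with `a, b < j` contributes
`t ^ (a + b) / (a + b)! * choose (a + b) a`. Grouping by `n = a + b`, each degree `n < j` collects
the full row `∑ₐ choose n a = 2 ^ n` and so reproduces the term `(2t) ^ n / n!`. What remains are
the degrees `j ≤ n ≤ 2(j - 1)`, where only `n - (j - 1) ≤ a ≤ j - 1` occurs, and these terms are
nonnegative for `t > 0`. -/

open Finset

theorem sum_range_mul_sum_range_eq_sum_range_sum_Icc {R : Type*} [CommSemiring R]
    (f g : ℕ → R) (j : ℕ) :
    (∑ a ∈ range j, f a) * (∑ b ∈ range j, g b)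
      = ∑ n ∈ range (2 * j - 1),
          ∑ a ∈ Icc (n - (j - 1)) (min n (j - 1)), f a * g (n - a) := by
  rw [sum_mul_sum, ← sum_product', sum_sigma']
  refine sum_nbij' (fun p => ⟨p.1 + p.2, p.1⟩) (fun q => (q.2, q.1 - q.2)) ?_ ?_ ?_ ?_ ?_
  all_goals
    rintro ⟨a, b⟩ h
    simp only [mem_product, mem_sigma, mem_range, mem_Icc, le_min_iff] at h ⊢
  · omega
  · omega
  · simp
  · simp only [Sigma.mk.injEq, heq_eq_eq, and_true]
    omega
  · simp

theorem div_factorial_mul_pow_div_factorial {K : Type*} [Field K] [CharZero K]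
    (t : K) {a n : ℕ} (h : a ≤ n) :
    t ^ a / a.factorial * (t ^ (n - a) / (n - a).factorial)
      = t ^ n / n.factorial * n.choose a := by
  have hn : (n.factorial : K) ≠ 0 := Nat.cast_ne_zero.mpr n.factorial_ne_zero
  rw [Nat.cast_choose K h, ← pow_mul_pow_sub t h]
  field_simp

theorem sum_range_pow_div_factorial_sq {K : Type*} [Field K] [CharZero K] (t : K) (j : ℕ) :
    (∑ i ∈ range j, t ^ i / i.factorial) ^ 2
      = ∑ n ∈ range (2 * j - 1),
          t ^ n / n.factorial * ∑ a ∈ Icc (n - (j - 1)) (min n (j - 1)), (n.choose a : K) := by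
  rw [sq, sum_range_mul_sum_range_eq_sum_range_sum_Icc]
  refine sum_congr rfl fun n _ => ?_
  rw [mul_sum]
  refine sum_congr rfl fun a ha => ?_
  exact div_factorial_mul_pow_div_factorial t (by simp only [mem_Icc] at ha; omega)

theorem sum_Icc_choose_of_le {R : Type*} [Semiring R] {n m : ℕ} (h : n ≤ m) :
    ∑ a ∈ Icc (n - m) (min n m), (n.choose a : R) = 2 ^ n := by
  rw [Nat.sub_eq_zero_of_le h, min_eq_left h, ← Nat.range_succ_eq_Icc_zero]
  simpa using congrArg (Nat.cast : ℕ → R) (Nat.sum_range_choose n)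

theorem sum_range_two_mul_pow_div_factorial_sub_sq {K : Type*} [Field K] [CharZero K]
    (t : K) {j : ℕ} (hj : 1 ≤ j) :
    (∑ i ∈ range j, (2 * t) ^ i / i.factorial) - (∑ i ∈ range j, t ^ i / i.factorial) ^ 2
      = -∑ i ∈ Icc j (2 * (j - 1)),
          t ^ i / i.factorial * ∑ k ∈ Icc (i - (j - 1)) (j - 1), (i.choose k : K) := by
  have hIco : Ico j (2 * j - 1) = Icc j (2 * (j - 1)) := by
    rw [← Ico_add_one_right_eq_Icc, show 2 * (j - 1) + 1 = 2 * j - 1 by omega]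
  have hlow : ∀ n ∈ range j, t ^ n / n.factorial
      * ∑ a ∈ Icc (n - (j - 1)) (min n (j - 1)), (n.choose a : K) = (2 * t) ^ n / n.factorial :=
    fun n hn => by
      rw [sum_Icc_choose_of_le (by rw [mem_range] at hn; omega), mul_pow]
      ring
  have hhigh : ∀ n ∈ Icc j (2 * (j - 1)), t ^ n / n.factorial
      * ∑ a ∈ Icc (n - (j - 1)) (min n (j - 1)), (n.choose a : K)
      = t ^ n / n.factorial * ∑ a ∈ Icc (n - (j - 1)) (j - 1), (n.choose a : K) :=
    fun n hn => by rw [min_eq_right (by rw [mem_Icc] at hn; omega)]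
  rw [sum_range_pow_div_factorial_sq, ← sum_range_add_sum_Ico _ (by omega : j ≤ 2 * j - 1), hIco,
    sum_congr rfl hlow, sum_congr rfl hhigh]
  ring

theorem stmt10 (j : ℕ) (hj : 2 ≤ j) (t : ℝ) (ht : 0 < t) :
    (∑ i ∈ Finset.range j, (2 * t) ^ i / (Nat.factorial i : ℝ))
      - (∑ i ∈ Finset.range j, t ^ i / (Nat.factorial i : ℝ)) ^ 2
      = -∑ i ∈ Finset.Icc j (2 * (j - 1)),
          t ^ i / (Nat.factorial i : ℝ)
            * ∑ k ∈ Finset.Icc (i - (j - 1)) (j - 1), (Nat.choose i k : ℝ) ∧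
    (∑ i ∈ Finset.range j, (2 * t) ^ i / (Nat.factorial i : ℝ))
      - (∑ i ∈ Finset.range j, t ^ i / (Nat.factorial i : ℝ)) ^ 2 ≤ 0 := by
  have hEq := sum_range_two_mul_pow_div_factorial_sub_sq t (by omega : 1 ≤ j)
  refine ⟨hEq, ?_⟩
  rw [hEq, neg_nonpos]
  positivity
end

section
/- Define $f(x) = \Phi(\sqrt{2}x) - \Phi(-\sqrt{2}x) - \sqrt{2}e^{-x^2/2}\Phi(x) + \sqrt{2}e^{-x^2/2}\Phi(-x) + 2\sqrt{\pi}\,x\,\Phi(-x)\Phi(x)$ for $x \ge 0$, where $\Phi$ is the standard normal distribution function. Then $f'(x) = 2\sqrt{\pi}\,\Phi(-x)\Phi(x)$; consequently $f$ is strictly increasing on $[0,\infty)$, continuous, with $f(0)=0$ and $\lim_{x\to\infty} f(x) = 1$, so for every $\varsigma \in (0,1)$ there is a unique $x > 0$ with $f(x) = 1-\varsigma$. -/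
/-!
With `Φ' = φ` and `φ' = -x φ`, differentiating `f` produces the terms `√2 φ(±√2 x)`, which cancel
against the products `e^{-x²/2} φ(±x)` because `√2 φ(√2 x) = 2√π φ(x)²`; the terms carrying a
factor `x φ(x)` cancel because `2√π / √(2π) = √2`. What remains is `f' = 2√π Φ(-x) Φ(x) > 0`.
The Gaussian tail bound `Φ(-x) ≤ e^{-x}` for `x ≥ 2` gives `Φ(-x) → 0` and `x Φ(-x) → 0`, hence
`f → 1`, and the level `1 - ς` is then attained exactly once by the intermediate value theorem.
-/

open Real Filter Set MeasureTheory Topology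

section IntegralIic

variable {E : Type*} [NormedAddCommGroup E] [NormedSpace ℝ E] {f : ℝ → E}

theorem hasDerivAt_integral_Iic [CompleteSpace E] (hf : Integrable f) (hc : Continuous f) (x : ℝ) :
    HasDerivAt (fun y => ∫ u in Iic y, f u) (f x) x := by
  have hsplit : (fun y => ∫ u in Iic y, f u) =
      fun y => (∫ u in Iic 0, f u) + ∫ u in (0 : ℝ)..y, f u := by
    funext y
    rw [← intervalIntegral.integral_Iic_sub_Iic hf.integrableOn hf.integrableOn]
    abel
  rw [hsplit]
  exact (intervalIntegral.integral_hasDerivAt_right (hc.intervalIntegrable 0 x)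
    (hc.stronglyMeasurableAtFilter _ _) hc.continuousAt).const_add _

theorem integral_Iic_neg_of_even (heven : ∀ u, f (-u) = f u) (x : ℝ) :
    ∫ u in Iic (-x), f u = ∫ u in Ioi x, f u := by
  simp only [← integral_comp_neg_Ioi, heven]

theorem integral_Iic_add_integral_Iic_neg_of_even (hf : Integrable f)
    (heven : ∀ u, f (-u) = f u) (x : ℝ) :
    (∫ u in Iic x, f u) + ∫ u in Iic (-x), f u = ∫ u, f u := by
  rw [integral_Iic_neg_of_even heven,
    intervalIntegral.integral_Iic_add_Ioi hf.integrableOn hf.integrableOn]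

end IntegralIic

theorem integrable_exp_neg_sq_div_two : Integrable fun u : ℝ => exp (-u ^ 2 / 2) := by
  simpa [neg_div, div_eq_inv_mul] using integrable_exp_neg_mul_sq (by norm_num : (0 : ℝ) < 1 / 2)

theorem integral_exp_neg_sq_div_two : ∫ u : ℝ, exp (-u ^ 2 / 2) = √(2 * π) := by
  rw [← show π / (1 / 2) = 2 * π by ring, ← integral_gaussian]
  congr with u
  ring_nf

theorem integral_Ioi_exp_neg_sq_div_two_le {x : ℝ} (hx : 2 ≤ x) :
    ∫ u in Ioi x, exp (-u ^ 2 / 2) ≤ exp (-x) := by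
  calc ∫ u in Ioi x, exp (-u ^ 2 / 2)
      ≤ ∫ u in Ioi x, exp (-u) := by
        refine setIntegral_mono_on integrable_exp_neg_sq_div_two.integrableOn
          (by simpa using exp_neg_integrableOn_Ioi x one_pos) measurableSet_Ioi fun u hu => ?_
        have : x < u := hu
        gcongr
        nlinarith
    _ = exp (-x) := integral_exp_neg_Ioi x

noncomputable def normCDF (x : ℝ) : ℝ := (√(2 * π))⁻¹ * ∫ u in Iic x, exp (-u ^ 2 / 2)

theorem hasDerivAt_normCDF (x : ℝ) :
    HasDerivAt normCDF ((√(2 * π))⁻¹ * exp (-x ^ 2 / 2)) x :=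
  (hasDerivAt_integral_Iic integrable_exp_neg_sq_div_two (by fun_prop) x).const_mul _

theorem normCDF_add_normCDF_neg (x : ℝ) : normCDF x + normCDF (-x) = 1 := by
  have : (0 : ℝ) < √(2 * π) := by positivity
  rw [normCDF, normCDF, ← mul_add, integral_Iic_add_integral_Iic_neg_of_even
    integrable_exp_neg_sq_div_two (fun u => by rw [neg_sq]) x, integral_exp_neg_sq_div_two,
    inv_mul_cancel₀ this.ne']

theorem normCDF_pos (x : ℝ) : 0 < normCDF x := by
  refine mul_pos (by positivity) ?_
  rw [setIntegral_pos_iff_support_of_nonneg_ae (Eventually.of_forall fun u => (exp_pos _).le)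
    integrable_exp_neg_sq_div_two.integrableOn]
  have : Function.support (fun u : ℝ => exp (-u ^ 2 / 2)) = univ :=
    eq_univ_of_forall fun u => (exp_pos _).ne'
  simp [this]

theorem normCDF_neg_le_exp {x : ℝ} (hx : 2 ≤ x) : normCDF (-x) ≤ exp (-x) := by
  have hc : (√(2 * π))⁻¹ ≤ 1 :=
    inv_le_one_of_one_le₀ (one_le_sqrt.mpr (by nlinarith [pi_gt_three]))
  rw [normCDF, integral_Iic_neg_of_even (fun u => by rw [neg_sq])]
  calc (√(2 * π))⁻¹ * ∫ u in Ioi x, exp (-u ^ 2 / 2) ≤ 1 * exp (-x) :=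
        mul_le_mul hc (integral_Ioi_exp_neg_sq_div_two_le hx)
          (setIntegral_nonneg measurableSet_Ioi fun u _ => (exp_pos _).le) zero_le_one
    _ = exp (-x) := one_mul _

theorem tendsto_normCDF_neg_atTop : Tendsto (fun x => normCDF (-x)) atTop (𝓝 0) :=
  squeeze_zero' (Eventually.of_forall fun _ => (normCDF_pos _).le)
    ((eventually_ge_atTop 2).mono fun _ => normCDF_neg_le_exp)
    (tendsto_exp_atBot.comp tendsto_neg_atTop_atBot)

theorem tendsto_mul_normCDF_neg_atTop : Tendsto (fun x => x * normCDF (-x)) atTop (𝓝 0) := by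
  refine squeeze_zero' ((eventually_ge_atTop 0).mono fun x hx => by
      have := normCDF_pos (-x); positivity)
    ((eventually_ge_atTop 2).mono fun x hx => ?_)
    (by simpa using tendsto_pow_mul_exp_neg_atTop_nhds_zero 1)
  exact mul_le_mul_of_nonneg_left (normCDF_neg_le_exp hx) (by linarith)

theorem tendsto_normCDF_atTop : Tendsto normCDF atTop (𝓝 1) := by
  have h := (tendsto_const_nhds (x := (1 : ℝ)) (f := atTop)).sub tendsto_normCDF_neg_atTop
  rw [sub_zero] at h
  exact h.congr fun x => by linarith [normCDF_add_normCDF_neg x]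

noncomputable def cdfCombination (x : ℝ) : ℝ :=
  normCDF (√2 * x) - normCDF (-(√2 * x))
    - √2 * exp (-x ^ 2 / 2) * normCDF x
    + √2 * exp (-x ^ 2 / 2) * normCDF (-x)
    + 2 * √π * x * normCDF (-x) * normCDF x

theorem two_mul_sqrt_pi_mul_inv_sqrt_two_mul_pi : 2 * √π * (√(2 * π))⁻¹ = √2 := by
  have hπ : 0 < √π := sqrt_pos.2 pi_pos
  rw [sqrt_mul zero_le_two]
  field_simp
  rw [sq_sqrt zero_le_two]

theorem hasDerivAt_cdfCombination (x : ℝ) :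
    HasDerivAt cdfCombination (2 * √π * normCDF (-x) * normCDF x) x := by
  have hΦ := hasDerivAt_normCDF
  have hsx : HasDerivAt (fun y => √2 * y) (√2) x := by
    simpa using (hasDerivAt_id x).const_mul √2
  have hnx : HasDerivAt (fun y : ℝ => -y) (-1) x := hasDerivAt_neg x
  have he : HasDerivAt (fun y : ℝ => exp (-y ^ 2 / 2)) (-x * exp (-x ^ 2 / 2)) x := by
    have hq : HasDerivAt (fun y : ℝ => -y ^ 2 / 2) (-x) x := by
      simpa [neg_div] using (hasDerivAt_pow 2 x).neg.div_const 2
    simpa [mul_comm] using hq.exp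
  have h := (((((hΦ _).comp x hsx).sub ((hΦ _).comp x hsx.neg)).sub
    ((he.const_mul √2).mul (hΦ x))).add ((he.const_mul √2).mul ((hΦ _).comp x hnx))).add
    ((((hasDerivAt_id x).const_mul (2 * √π)).mul ((hΦ _).comp x hnx)).mul (hΦ x))
  refine h.congr_deriv ?_
  have e1 : exp (-(√2 * x) ^ 2 / 2) = exp (-x ^ 2 / 2) * exp (-x ^ 2 / 2) := by
    rw [← exp_add, mul_pow, sq_sqrt zero_le_two]; ring_nf
  simp only [Function.comp_apply, Pi.neg_apply, Pi.mul_apply, id, neg_sq, e1]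
  linear_combination (x * exp (-x ^ 2 / 2) * (normCDF (-x) - normCDF x)) *
    two_mul_sqrt_pi_mul_inv_sqrt_two_mul_pi

theorem cdfCombination_zero : cdfCombination 0 = 0 := by
  simp [cdfCombination]

theorem strictMono_cdfCombination : StrictMono cdfCombination :=
  strictMono_of_deriv_pos fun x => by
    rw [(hasDerivAt_cdfCombination x).deriv]
    have := normCDF_pos x
    have := normCDF_pos (-x)
    positivity

theorem tendsto_cdfCombination_atTop : Tendsto cdfCombination atTop (𝓝 1) := by
  have hs : Tendsto (fun x => √2 * x) atTop atTop := tendsto_id.const_mul_atTop (by positivity)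
  have he : Tendsto (fun x : ℝ => exp (-x ^ 2 / 2)) atTop (𝓝 0) := tendsto_exp_atBot.comp
    ((tendsto_neg_atTop_atBot.comp (tendsto_pow_atTop two_ne_zero)).atBot_div_const two_pos)
  have h := ((((tendsto_normCDF_atTop.comp hs).sub (tendsto_normCDF_neg_atTop.comp hs)).sub
    ((he.const_mul √2).mul tendsto_normCDF_atTop)).add
    ((he.const_mul √2).mul tendsto_normCDF_neg_atTop)).add
    ((tendsto_mul_normCDF_neg_atTop.const_mul (2 * √π)).mul tendsto_normCDF_atTop)
  simp only [mul_zero, zero_mul, sub_zero, add_zero] at h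
  exact h.congr fun x => by simp only [cdfCombination, Function.comp_apply]; ring

theorem StrictMono.existsUnique_gt_eq_of_tendsto {α β : Type*}
    [ConditionallyCompleteLinearOrder α] [TopologicalSpace α] [OrderTopology α] [DenselyOrdered α]
    [LinearOrder β] [TopologicalSpace β] [OrderClosedTopology β]
    {f : α → β} {a : α} {y L : β} (hmono : StrictMono f) (hcont : Continuous f)
    (hlim : Tendsto f atTop (𝓝 L)) (hay : f a < y) (hyL : y < L) :
    ∃! x, a < x ∧ f x = y := by
  obtain ⟨b, hyb, hab⟩ := ((hlim.eventually (eventually_gt_nhds hyL)).and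
    (eventually_ge_atTop a)).exists
  obtain ⟨x, hx, hfx⟩ := intermediate_value_Ioo hab hcont.continuousOn ⟨hay, hyb⟩
  exact ⟨x, ⟨hx.1, hfx⟩, fun x' hx' => hmono.injective (hx'.2.trans hfx.symm)⟩

theorem stmt13 (Φ : ℝ → ℝ)
    (hΦ : ∀ x : ℝ, Φ x = (Real.sqrt (2 * π))⁻¹ * ∫ u in Set.Iic x, Real.exp (-u ^ 2 / 2))
    (f : ℝ → ℝ)
    (hf : ∀ x : ℝ, f x =
      Φ (Real.sqrt 2 * x) - Φ (-(Real.sqrt 2 * x))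
        - Real.sqrt 2 * Real.exp (-x ^ 2 / 2) * Φ x
        + Real.sqrt 2 * Real.exp (-x ^ 2 / 2) * Φ (-x)
        + 2 * Real.sqrt π * x * Φ (-x) * Φ x) :
    (∀ x : ℝ, HasDerivAt f (2 * Real.sqrt π * Φ (-x) * Φ x) x) ∧
    StrictMonoOn f (Set.Ici 0) ∧
    Continuous f ∧
    f 0 = 0 ∧
    Tendsto f atTop (nhds 1) ∧
    ∀ ς : ℝ, ς ∈ Set.Ioo (0 : ℝ) 1 → ∃! x : ℝ, 0 < x ∧ f x = 1 - ς := by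
  obtain rfl : Φ = normCDF := funext hΦ
  obtain rfl : f = cdfCombination := funext hf
  have hcont : Continuous cdfCombination :=
    continuous_iff_continuousAt.2 fun x => (hasDerivAt_cdfCombination x).continuousAt
  refine ⟨hasDerivAt_cdfCombination, strictMono_cdfCombination.strictMonoOn _, hcont,
    cdfCombination_zero, tendsto_cdfCombination_atTop, fun ς ⟨hς₀, hς₁⟩ => ?_⟩
  exact strictMono_cdfCombination.existsUnique_gt_eq_of_tendsto hcont tendsto_cdfCombination_atTop
    (by rw [cdfCombination_zero]; linarith) (by linarith)
end

section
/- Let $\ell$ be a measurable function slowly varying at infinity. Then there exists a positive function $c$ with $\lim_{t\to\infty} c(t)/t = \infty$ and $\lim_{t\to\infty} \ell(c(t))/\ell(t) = 1$. -/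
/-!
Slow variation gives `ℓ (λ t) / ℓ t → 1` for each fixed `λ`, in particular for `λ = n + 1`.
A diagonal argument lets `λ` grow with `t`: `c t = (N t + 1) t` where `N t → ∞` slowly enough that
`t` is already past the point from which the ratio for `λ = N t + 1` is close to `1`.
-/

open Filter Topology

namespace Filter

theorem exists_tendsto_atTop_eventually_diag {α : Type*} {l : Filter α} {u : α → ℕ}
    (hu : Tendsto u l atTop) {p : ℕ → α → Prop} (hp : ∀ n, ∀ᶠ x in l, p n x) :
    ∃ N : α → ℕ, Tendsto N l atTop ∧ ∀ᶠ x in l, p (N x) x := by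
  classical
  have hq : ∀ n, ∀ᶠ x in l, ∀ m ∈ Set.Iic n, p m x :=
    fun n => (Set.finite_Iic n).eventually_all.2 fun m _ => hp m
  refine ⟨fun x => Nat.findGreatest (fun n => ∀ m ∈ Set.Iic n, p m x) (u x), ?_, ?_⟩
  · refine tendsto_atTop.2 fun n => ?_
    filter_upwards [hq n, hu.eventually_ge_atTop n] with x hx hn
    exact Nat.le_findGreatest hn hx
  · filter_upwards [hq 0] with x hx
    exact Nat.findGreatest_spec (P := fun n => ∀ m ∈ Set.Iic n, p m x) (Nat.zero_le _) hx _
      Set.self_mem_Iic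

theorem exists_tendsto_atTop_tendsto_diag {α β : Type*} [TopologicalSpace β]
    [FirstCountableTopology β] {l : Filter α} {u : α → ℕ} (hu : Tendsto u l atTop)
    {F : ℕ → α → β} {y : β} (hF : ∀ n, Tendsto (F n) l (𝓝 y)) :
    ∃ N : α → ℕ, Tendsto N l atTop ∧ Tendsto (fun x => F (N x) x) l (𝓝 y) := by
  obtain ⟨U, hU⟩ := (𝓝 y).exists_antitone_basis
  obtain ⟨N, hN, hNU⟩ := exists_tendsto_atTop_eventually_diag hu
    (p := fun n x => F n x ∈ U n) fun n => hF n (hU.mem n)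
  refine ⟨N, hN, hU.tendsto_right_iff.2 fun k _ => ?_⟩
  filter_upwards [hNU, hN.eventually_ge_atTop k] with x hx hk
  exact hU.antitone hk hx

end Filter

theorem stmt14_general (ℓ : ℝ → ℝ)
    (hslow : ∀ lam : ℝ, 0 < lam →
      Tendsto (fun t => ℓ (lam * t) / ℓ t) atTop (nhds 1)) :
    ∃ c : ℝ → ℝ, (∀ t : ℝ, 0 < c t) ∧
      Tendsto (fun t => c t / t) atTop atTop ∧
      Tendsto (fun t => ℓ (c t) / ℓ t) atTop (nhds 1) := by
  obtain ⟨N, hN, hratio⟩ := exists_tendsto_atTop_tendsto_diag tendsto_nat_ceil_atTop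
    (F := fun n t => ℓ (((n : ℝ) + 1) * t) / ℓ t) fun n => hslow _ n.cast_add_one_pos
  have hc : ∀ᶠ t in atTop, ((N t : ℝ) + 1) * max t 1 = ((N t : ℝ) + 1) * t := by
    filter_upwards [eventually_ge_atTop 1] with t ht
    rw [max_eq_left ht]
  refine ⟨fun t => ((N t : ℝ) + 1) * max t 1, fun t => by positivity, ?_, ?_⟩
  · refine (tendsto_atTop_add_const_right _ 1 (tendsto_natCast_atTop_atTop.comp hN)).congr' ?_
    filter_upwards [hc, eventually_gt_atTop 0] with t ht htpos
    rw [ht, mul_div_cancel_right₀ _ htpos.ne']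
    rfl
  · refine hratio.congr' ?_
    filter_upwards [hc] with t ht
    rw [ht]

theorem stmt14 (ℓ : ℝ → ℝ) (hmeas : Measurable ℓ)
    (hpos : ∀ t : ℝ, 0 < t → 0 < ℓ t)
    (hslow : ∀ lam : ℝ, 0 < lam →
      Tendsto (fun t => ℓ (lam * t) / ℓ t) atTop (nhds 1)) :
    ∃ c : ℝ → ℝ, (∀ t : ℝ, 0 < c t) ∧
      Tendsto (fun t => c t / t) atTop atTop ∧
      Tendsto (fun t => ℓ (c t) / ℓ t) atTop (nhds 1) :=
  stmt14_general ℓ hslow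
end
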